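/- arXiv:math/0406400 — 4 statements merged into one kernel-verified Lean document; each statement's English description precedes it below -/
import Mathlib

section
/- Let U ⊆ ℝ⁴ be an open set with coordinates (x,y,p,q) and let F : U → ℝ be smooth. Define the 1-forms ω¹ = dy − p dx, ω² = dp − q dx and ω̂³ = dq − (1/3)F_q dp + K dy + ((1/3) q F_q − F − p K) dx, and the symmetric bilinear form g̃ on U whose value at a point m on vectors u,v ∈ ℝ⁴ is g̃_m(u,v) = ω¹_m(u) ω̂³_m(v) + ω̂³_m(u) ω¹_m(v) − ω²_m(u) ω²_m(v). Then at every point m = (x,y,p,q) ∈ U, the radical {u ∈ ℝ⁴ : g̃_m(u,v) = 0 for all v ∈ ℝ⁴} of g̃_m is exactly the one-dimensional line spanned by the vector D(m) = (1, p, q, F(m)); in particular g̃ is everywhere degenerate of rank 3 with degenerate direction the total derivative vector field D. -/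
noncomputable section

/-- Points of the second jet space: coordinates `(x, y, p, q)`. -/
abbrev V4 : Type := ℝ × ℝ × ℝ × ℝ

/-- Directional (partial) derivative of `f` at `m` in the constant direction `v`. -/
def pd (v : V4) (f : V4 → ℝ) (m : V4) : ℝ := fderiv ℝ f m v

/-- Coordinate directions. -/
def ex : V4 := (1, 0, 0, 0)
def ey : V4 := (0, 1, 0, 0)
def ep : V4 := (0, 0, 1, 0)
def eq' : V4 := (0, 0, 0, 1)

/-- The total derivative vector field `D = ∂ₓ + p ∂_y + q ∂_p + F ∂_q`, as a vector:
`D(m) = (1, p, q, F(m))`. -/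
def Dvec (F : V4 → ℝ) (m : V4) : V4 := (1, m.2.2.1, m.2.2.2, F m)

/-- The total derivative operator acting on functions:
`(Dh)(m) = h_x + p h_y + q h_p + F h_q`. -/
def Dtot (F : V4 → ℝ) (h : V4 → ℝ) (m : V4) : ℝ :=
  pd ex h m + m.2.2.1 * pd ey h m + m.2.2.2 * pd ep h m + F m * pd eq' h m

/-- `K = (1/6) D(F_q) − (1/9) F_q² − (1/2) F_p`. -/
def Kf (F : V4 → ℝ) (m : V4) : ℝ :=
  (1/6) * Dtot F (pd eq' F) m - (1/9) * (pd eq' F m)^2 - (1/2) * pd ep F m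

/-- `ω¹ = dy − p dx` evaluated at `m` on the vector `v`. -/
def w1 (m v : V4) : ℝ := v.2.1 - m.2.2.1 * v.1

/-- `ω² = dp − q dx` evaluated at `m` on the vector `v`. -/
def w2 (m v : V4) : ℝ := v.2.2.1 - m.2.2.2 * v.1

/-- `ω̂³ = dq − (1/3) F_q dp + K dy + ((1/3) q F_q − F − p K) dx`. -/
def w3 (F : V4 → ℝ) (m v : V4) : ℝ :=
  v.2.2.2 - (1/3) * pd eq' F m * v.2.2.1 + Kf F m * v.2.1 +
    ((1/3) * m.2.2.2 * pd eq' F m - F m - m.2.2.1 * Kf F m) * v.1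

/-- The degenerate bilinear form `g̃ = 2 ω¹ ω̂³ − (ω²)²` (symmetrized product). -/
def gt (F : V4 → ℝ) (m u v : V4) : ℝ :=
  w1 m u * w3 F m v + w3 F m u * w1 m v - w2 m u * w2 m v

/-- At every point `m` of `U` the radical of `g̃_m` is exactly the line spanned by the
total derivative vector `D(m) = (1, p, q, F(m))`; in particular `g̃` is everywhere
degenerate of rank 3 with degenerate direction `D`. -/
theorem radical_of_gt_eq_span_D
    (U : Set V4) (hU : IsOpen U) (F : V4 → ℝ) (hF : ContDiffOn ℝ (⊤ : ℕ∞) F U) :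
    ∀ m ∈ U, {u : V4 | ∀ v : V4, gt F m u v = 0} =
      ↑(Submodule.span ℝ ({Dvec F m} : Set V4)) := by
  intro m hm
  ext u
  simp only [Set.mem_setOf_eq, SetLike.mem_coe, Submodule.mem_span_singleton]
  obtain ⟨a, b, c, d⟩ := u
  constructor
  · intro h
    have h1 := h eq'
    have h2 := h ey
    have h3 := h ep
    simp only [gt, w1, w2, w3, eq', ey, ep] at h1 h2 h3
    norm_num at h1 h2 h3
    refine ⟨a, ?_⟩
    have e1 : b = m.2.2.1 * a := by linarith
    subst e1
    have e2 : c = m.2.2.2 * a := by linear_combination -h3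
    subst e2
    have e3 : d = F m * a := by linear_combination h2
    subst e3
    simp only [Dvec, Prod.smul_mk, smul_eq_mul, Prod.mk.injEq]
    refine ⟨by ring, by ring, by ring, by ring⟩
  · rintro ⟨t, ht⟩ v
    simp only [Dvec, Prod.smul_mk, smul_eq_mul, Prod.mk.injEq] at ht
    obtain ⟨ht1, ht2, ht3, ht4⟩ := ht
    simp only [gt, w1, w2, w3]
    subst ht1 ht2 ht3 ht4
    ring
end
end

section
/- Let U ⊆ ℝ⁴ be a nonempty open set with coordinates (x,y,p,q) and let F : U → ℝ be smooth. Let g̃ = g̃_{ij} dx^i dx^j be the symmetric bilinear form with g̃_m(u,v) = ω¹_m(u) ω̂³_m(v) + ω̂³_m(u) ω¹_m(v) − ω²_m(u) ω²_m(v), where ω¹ = dy − p dx, ω² = dp − q dx, ω̂³ = dq − (1/3)F_q dp + K dy + ((1/3) q F_q − F − p K) dx. Let D = (1, p, q, F) be the total derivative vector field and define the Lie derivative of g̃ along D componentwise by (L_D g̃)_{ij} = Σ_k [ D^k ∂_k g̃_{ij} + g̃_{kj} ∂_i D^k + g̃_{ik} ∂_j D^k ]. Then there exists a smooth function λ : U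 → ℝ such that L_D g̃ = λ g̃ throughout U if and only if the Wuenschmann expression A = F_y + D(K) − (2/3) F_q K vanishes identically on U. -/
noncomputable section

/-- The coordinate basis of `ℝ⁴`. -/
def bas : Fin 4 → V4 := ![ex, ey, ep, eq']

/-- The coordinate components of a vector in `ℝ⁴`. -/
def comp : Fin 4 → V4 → ℝ :=
  ![fun v => v.1, fun v => v.2.1, fun v => v.2.2.1, fun v => v.2.2.2]

/-- The components `g̃_{ij}` of `g̃` in the coordinate basis. -/
def gmat (F : V4 → ℝ) (m : V4) (i j : Fin 4) : ℝ := gt F m (bas i) (bas j)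

/-- The componentwise Lie derivative of `g̃` along `D`:
`(L_D g̃)_{ij} = Σ_k [ D^k ∂_k g̃_{ij} + g̃_{kj} ∂_i D^k + g̃_{ik} ∂_j D^k ]`. -/
def lieD (F : V4 → ℝ) (m : V4) (i j : Fin 4) : ℝ :=
  ∑ k : Fin 4,
    (comp k (Dvec F m) * pd (bas k) (fun m' => gmat F m' i j) m +
      gmat F m k j * pd (bas i) (fun m' => comp k (Dvec F m')) m +
      gmat F m i k * pd (bas j) (fun m' => comp k (Dvec F m')) m)

/-- The Wuenschmann expression `A = F_y + D(K) − (2/3) F_q K`. -/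
def Wu (F : V4 → ℝ) (m : V4) : ℝ :=
  pd ey F m + Dtot F (Kf F) m - (2/3) * pd eq' F m * Kf F m


/-! ### Auxiliary lemmas -/

theorem pd_add {f g : V4 → ℝ} {m : V4} (v : V4) (hf : DifferentiableAt ℝ f m)
    (hg : DifferentiableAt ℝ g m) :
    pd v (fun x => f x + g x) m = pd v f m + pd v g m := by simp [pd, fderiv_fun_add hf hg]

theorem pd_sub {f g : V4 → ℝ} {m : V4} (v : V4) (hf : DifferentiableAt ℝ f m)
    (hg : DifferentiableAt ℝ g m) :
    pd v (fun x => f x - g x) m = pd v f m - pd v g m := by simp [pd, fderiv_fun_sub hf hg]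

theorem pd_mul {f g : V4 → ℝ} {m : V4} (v : V4) (hf : DifferentiableAt ℝ f m)
    (hg : DifferentiableAt ℝ g m) :
    pd v (fun x => f x * g x) m = f m * pd v g m + g m * pd v f m := by
  simp [pd, fderiv_fun_mul hf hg]

theorem pd_const (v m : V4) (c : ℝ) : pd v (fun _ => c) m = 0 := by simp [pd]

theorem pd_projp (v m : V4) : pd v (fun x : V4 => x.2.2.1) m = v.2.2.1 := by
  rw [pd, show (fun x : V4 => x.2.2.1) = ⇑((ContinuousLinearMap.fst ℝ ℝ ℝ).comp
      ((ContinuousLinearMap.snd ℝ ℝ (ℝ × ℝ)).comp (ContinuousLinearMap.snd ℝ ℝ (ℝ × ℝ × ℝ))))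
      from rfl, ContinuousLinearMap.fderiv]; rfl

theorem pd_projq (v m : V4) : pd v (fun x : V4 => x.2.2.2) m = v.2.2.2 := by
  rw [pd, show (fun x : V4 => x.2.2.2) = ⇑((ContinuousLinearMap.snd ℝ ℝ ℝ).comp
      ((ContinuousLinearMap.snd ℝ ℝ (ℝ × ℝ)).comp (ContinuousLinearMap.snd ℝ ℝ (ℝ × ℝ × ℝ))))
      from rfl, ContinuousLinearMap.fderiv]; rfl

set_option maxHeartbeats 2000000 in
theorem key (F : V4 → ℝ) (m : V4) (hdF : DifferentiableAt ℝ F m)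
    (hdG : DifferentiableAt ℝ (pd eq' F) m) (hdK : DifferentiableAt ℝ (Kf F) m)
    (u v : V4) :
    Dtot F (fun m' => gt F m' u v) m
      + (gt F m ey v * u.2.2.1 + gt F m ep v * u.2.2.2 +
         gt F m eq' v * (u.1 * pd ex F m + u.2.1 * pd ey F m + u.2.2.1 * pd ep F m +
            u.2.2.2 * pd eq' F m))
      + (gt F m u ey * v.2.2.1 + gt F m u ep * v.2.2.2 +
         gt F m u eq' * (v.1 * pd ex F m + v.2.1 * pd ey F m + v.2.2.1 * pd ep F m +
            v.2.2.2 * pd eq' F m))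
      = (2/3) * pd eq' F m * gt F m u v + 2 * Wu F m * (w1 m u * w1 m v) := by
  simp (disch := fun_prop) only [Dtot, gt, w1, w2, w3,
    pd_add, pd_sub, pd_mul, pd_const, pd_projp, pd_projq]
  simp only [Wu, Kf, Dtot, ex, ey, ep, eq']
  ring

theorem bas_one : bas 1 = ey := by simp [bas]
theorem bas_two : bas 2 = ep := by simp [bas]
theorem bas_three : bas 3 = eq' := by simp [bas]

theorem pd_bas (F : V4 → ℝ) (m : V4) (i : Fin 4) :
    pd (bas i) F m = (bas i).1 * pd ex F m + (bas i).2.1 * pd ey F m +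
      (bas i).2.2.1 * pd ep F m + (bas i).2.2.2 * pd eq' F m := by
  fin_cases i <;> simp [bas, ex, ey, ep, eq']

theorem lieD_formula (F : V4 → ℝ) (m : V4) (i j : Fin 4) :
    lieD F m i j = Dtot F (fun m' => gmat F m' i j) m
      + (gt F m ey (bas j) * (bas i).2.2.1 + gt F m ep (bas j) * (bas i).2.2.2 +
          gt F m eq' (bas j) * pd (bas i) F m)
      + (gt F m (bas i) ey * (bas j).2.2.1 + gt F m (bas i) ep * (bas j).2.2.2 +
          gt F m (bas i) eq' * pd (bas j) F m) := by
  simp [lieD, Fin.sum_univ_four, comp, Dvec, bas, Dtot, gmat,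
    pd_const, pd_projp, pd_projq]
  ring

theorem key2 (F : V4 → ℝ) (m : V4) (hdF : DifferentiableAt ℝ F m)
    (hdG : DifferentiableAt ℝ (pd eq' F) m) (hdK : DifferentiableAt ℝ (Kf F) m)
    (i j : Fin 4) :
    lieD F m i j = (2/3) * pd eq' F m * gmat F m i j +
      2 * Wu F m * (w1 m (bas i) * w1 m (bas j)) := by
  rw [lieD_formula, pd_bas F m i, pd_bas F m j,
    show (fun m' => gmat F m' i j) = fun m' => gt F m' (bas i) (bas j) from rfl,
    show gmat F m i j = gt F m (bas i) (bas j) from rfl]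
  exact key F m hdF hdG hdK (bas i) (bas j)

/-- `g̃` transforms conformally under the Lie transport along the total derivative field `D`
(i.e. `L_D g̃ = λ g̃` for some smooth function `λ`) if and only if the Wuenschmann
expression `A` vanishes identically on `U`. -/
theorem lieDeriv_conformal_iff_wuenschmann
    (U : Set V4) (hU : IsOpen U) (hne : U.Nonempty)
    (F : V4 → ℝ) (hF : ContDiffOn ℝ (⊤ : ℕ∞) F U) :
    (∃ lam : V4 → ℝ, ContDiffOn ℝ (⊤ : ℕ∞) lam U ∧
        ∀ m ∈ U, ∀ i j : Fin 4, lieD F m i j = lam m * gmat F m i j) ↔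
      (∀ m ∈ U, Wu F m = 0) := by
  -- Differentiability facts at each point of `U`.
  have hdiff : ∀ m ∈ U, DifferentiableAt ℝ F m ∧ DifferentiableAt ℝ (pd eq' F) m ∧
      DifferentiableAt ℝ (Kf F) m ∧ ContDiffAt ℝ (⊤ : ℕ∞) (pd eq' F) m := by
    intro m hm
    have hFt : ContDiffAt ℝ (⊤ : ℕ∞) F m := hF.contDiffAt (hU.mem_nhds hm)
    have h1 : ContDiffAt ℝ (⊤ : ℕ∞) (fderiv ℝ F) m := hFt.fderiv_right (by simp)
    have hG : ContDiffAt ℝ (⊤ : ℕ∞) (pd eq' F) m := h1.clm_apply contDiffAt_const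
    have h2 : ContDiffAt ℝ (⊤ : ℕ∞) (fderiv ℝ (pd eq' F)) m := hG.fderiv_right (by simp)
    have hGw : ∀ w : V4, DifferentiableAt ℝ (pd w (pd eq' F)) m := fun w =>
      (h2.clm_apply contDiffAt_const : ContDiffAt ℝ (⊤ : ℕ∞) (pd w (pd eq' F)) m).differentiableAt
        (by simp)
    have hGw1 := hGw ex; have hGw2 := hGw ey; have hGw3 := hGw ep; have hGw4 := hGw eq'
    have hFw : ∀ w : V4, DifferentiableAt ℝ (pd w F) m := fun w =>
      (h1.clm_apply contDiffAt_const : ContDiffAt ℝ (⊤ : ℕ∞) (pd w F) m).differentiableAt (by simp)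
    have hFw3 := hFw ep; have hFw4 := hFw eq'
    have hdF : DifferentiableAt ℝ F m := hFt.differentiableAt (by simp)
    have hdK : DifferentiableAt ℝ (Kf F) m := by
      rw [show Kf F = fun m' => (1/6) * (pd ex (pd eq' F) m' + m'.2.2.1 * pd ey (pd eq' F) m' +
          m'.2.2.2 * pd ep (pd eq' F) m' + F m' * pd eq' (pd eq' F) m') -
          (1/9) * (pd eq' F m')^2 - (1/2) * pd ep F m' from rfl]
      fun_prop
    exact ⟨hdF, hG.differentiableAt (by simp), hdK, hG⟩
  constructor
  · rintro ⟨lam, -, hl⟩ m hm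
    obtain ⟨hdF, hdG, hdK, -⟩ := hdiff m hm
    have e22 := hl m hm 2 2
    have e11 := hl m hm 1 1
    rw [key2 F m hdF hdG hdK] at e22 e11
    have g22 : gmat F m 2 2 = -1 := by
      simp [gmat, bas_two, gt, w1, w2, w3, ep]
    have w12 : w1 m (bas 2) = 0 := by simp [bas_two, w1, ep]
    have g11 : gmat F m 1 1 = Kf F m + Kf F m := by
      simp [gmat, bas_one, gt, w1, w2, w3, ey]
    have w11 : w1 m (bas 1) = 1 := by simp [bas_one, w1, ey]
    rw [g22, w12] at e22
    rw [g11, w11] at e11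
    have hlam : lam m = (2/3) * pd eq' F m := by nlinarith [e22]
    rw [hlam] at e11
    nlinarith [e11]
  · intro hWu
    refine ⟨fun m => (2/3) * pd eq' F m, ?_, ?_⟩
    · intro m hm
      have hFt : ContDiffAt ℝ (⊤ : ℕ∞) F m := hF.contDiffAt (hU.mem_nhds hm)
      have h1 : ContDiffAt ℝ (⊤ : ℕ∞) (fderiv ℝ F) m := hFt.fderiv_right (by simp)
      have hG : ContDiffAt ℝ (⊤ : ℕ∞) (pd eq' F) m := h1.clm_apply contDiffAt_const
      exact (contDiffAt_const.mul hG).contDiffWithinAt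
    · intro m hm i j
      obtain ⟨hdF, hdG, hdK, -⟩ := hdiff m hm
      rw [key2 F m hdF hdG hdK, hWu m hm]
      ring
end
end

section
/- Let u : ℝ³ → ℝ be smooth with coordinates (x,y,t), and define vector fields X₁ and X₂ on ℝ⁴ (coordinates (x,y,t,v)) by X₁(x,y,t,v) = (−v, 1, 0, u_x(x,y,t)) and X₂(x,y,t,v) = (−(u(x,y,t)+v²), 0, 1, u_y(x,y,t) + u_x(x,y,t) v). Then the Lie bracket of these vector fields satisfies, at every point (x,y,t,v) ∈ ℝ⁴: [X₁, X₂](x,y,t,v) = ( u_yy + u_x² + u u_xx − u_xt )(x,y,t) · (0,0,0,1). -/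
noncomputable section

/-- `ℝ³` with coordinates `(x, y, t)`. -/
abbrev V3 : Type := ℝ × ℝ × ℝ

/-- `ℝ⁴` with coordinates `(x, y, t, v)`. -/
abbrev W4 : Type := ℝ × ℝ × ℝ × ℝ

/-- Directional (partial) derivative of `f : ℝ³ → ℝ` in the constant direction `v`. -/
def pd3 (v : V3) (f : V3 → ℝ) (m : V3) : ℝ := fderiv ℝ f m v

def ex3 : V3 := (1, 0, 0)
def ey3 : V3 := (0, 1, 0)
def et3 : V3 := (0, 0, 1)

/-- Projection `(x,y,t,v) ↦ (x,y,t)`. -/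
def pr3 (m : W4) : V3 := (m.1, m.2.1, m.2.2.1)

/-- The vector field `X₁(x,y,t,v) = (−v, 1, 0, u_x)`. -/
def X1 (u : V3 → ℝ) (m : W4) : W4 := (-m.2.2.2, 1, 0, pd3 ex3 u (pr3 m))

/-- The vector field `X₂(x,y,t,v) = (−(u+v²), 0, 1, u_y + u_x v)`. -/
def X2 (u : V3 → ℝ) (m : W4) : W4 :=
  (-(u (pr3 m) + m.2.2.2^2), 0, 1, pd3 ey3 u (pr3 m) + pd3 ex3 u (pr3 m) * m.2.2.2)

/-- The Lie bracket of vector fields on `ℝ⁴`: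
`[X,Y](m) = (DY)(m)·X(m) − (DX)(m)·Y(m)`. -/
def lieBracket (X Y : W4 → W4) (m : W4) : W4 :=
  fderiv ℝ Y m (X m) - fderiv ℝ X m (Y m)

-- auxiliary : derivative of pr3
def pr3L : W4 →L[ℝ] V3 :=
  (ContinuousLinearMap.fst ℝ ℝ (ℝ × ℝ × ℝ)).prod
    (((ContinuousLinearMap.fst ℝ ℝ (ℝ × ℝ)).prod
      ((ContinuousLinearMap.fst ℝ ℝ ℝ).comp (ContinuousLinearMap.snd ℝ ℝ (ℝ × ℝ)))).comp
      (ContinuousLinearMap.snd ℝ ℝ (ℝ × ℝ × ℝ)))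

lemma pr3L_apply (k : W4) : pr3L k = (k.1, k.2.1, k.2.2.1) := rfl

lemma hasFDerivAt_pr3 (m : W4) : HasFDerivAt pr3 pr3L m :=
  by
  have h := HasFDerivAt.prodMk (hasFDerivAt_fst (𝕜 := ℝ) (p := m))
    (HasFDerivAt.prodMk (HasFDerivAt.comp m (hasFDerivAt_fst (𝕜 := ℝ) (p := m.2)) (hasFDerivAt_snd (𝕜 := ℝ) (p := m)))
    (HasFDerivAt.comp m (hasFDerivAt_fst (𝕜 := ℝ) (p := m.2.2))
      (HasFDerivAt.comp m (hasFDerivAt_snd (𝕜 := ℝ) (p := m.2)) (hasFDerivAt_snd (𝕜 := ℝ) (p := m)))))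
  exact h

def p4 : W4 →L[ℝ] ℝ :=
  (ContinuousLinearMap.snd ℝ ℝ ℝ).comp ((ContinuousLinearMap.snd ℝ ℝ (ℝ × ℝ)).comp
    (ContinuousLinearMap.snd ℝ ℝ (ℝ × ℝ × ℝ)))

lemma hasFDerivAt_p4 (m : W4) : HasFDerivAt (fun m : W4 => m.2.2.2) p4 m :=
  hasFDerivAt_snd.comp _ (hasFDerivAt_snd.comp m hasFDerivAt_snd)


/-- For smooth `u : ℝ³ → ℝ`, the Lie bracket of `X₁` and `X₂` equals
`(u_yy + u_x² + u u_xx − u_xt) · (0,0,0,1)` at every point. -/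
theorem lieBracket_X1_X2 (u : V3 → ℝ) (hu : ContDiff ℝ (⊤ : ℕ∞) u) :
    ∀ m : W4,
      lieBracket (X1 u) (X2 u) m =
        (pd3 ey3 (pd3 ey3 u) (pr3 m) + (pd3 ex3 u (pr3 m))^2 +
            u (pr3 m) * pd3 ex3 (pd3 ex3 u) (pr3 m) -
            pd3 et3 (pd3 ex3 u) (pr3 m)) • ((0, 0, 0, 1) : W4) := by
  intro m
  set p : V3 := pr3 m with hp
  set D2 : V3 →L[ℝ] V3 →L[ℝ] ℝ := fderiv ℝ (fderiv ℝ u) p with hD2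
  have hud : Differentiable ℝ u := hu.differentiable (by simp)
  have hufd : ContDiff ℝ (⊤ : ℕ∞) (fderiv ℝ u) := hu.fderiv_right (by simp)
  have hD : HasFDerivAt (fderiv ℝ u) D2 p := (hufd.differentiable (by simp) p).hasFDerivAt
  -- derivative of q ↦ fderiv u q e
  have hψ : ∀ e : V3, HasFDerivAt (fun q => fderiv ℝ u q e)
      ((ContinuousLinearMap.apply ℝ ℝ e).comp D2) p := fun e =>
    ((ContinuousLinearMap.apply ℝ ℝ e).hasFDerivAt).comp p hD
  have hpr := hasFDerivAt_pr3 m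
  -- second derivatives identities
  have hpd : ∀ a e : V3, pd3 a (fun q => fderiv ℝ u q e) p = D2 a e := by
    intro a e
    simp [pd3, (hψ e).fderiv]
  have hsymm : ∀ v w, D2 v w = D2 w v := (hu.contDiffAt.isSymmSndFDerivAt (by rw [minSmoothness_of_isRCLikeNormedField]; exact WithTop.coe_le_coe.mpr le_top))
  -- derivative of X1
  have hX1c : HasFDerivAt (fun m : W4 => fderiv ℝ u (pr3 m) ex3)
      (((ContinuousLinearMap.apply ℝ ℝ ex3).comp D2).comp pr3L) m := by have := (hψ ex3).comp m hpr; exact this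
  have hX1 : HasFDerivAt (X1 u)
      (((-p4).prod ((0 : W4 →L[ℝ] ℝ).prod ((0 : W4 →L[ℝ] ℝ).prod
        (((ContinuousLinearMap.apply ℝ ℝ ex3).comp D2).comp pr3L))))) m := by
    exact HasFDerivAt.prodMk (hasFDerivAt_p4 m).neg
      (HasFDerivAt.prodMk (hasFDerivAt_const 1 m) (HasFDerivAt.prodMk (hasFDerivAt_const 0 m) hX1c))
  -- derivative of X2
  have hv2 : HasFDerivAt (fun m : W4 => m.2.2.2 ^ 2)
      (m.2.2.2 • p4 + m.2.2.2 • p4) m := by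
    have h := (hasFDerivAt_p4 m).mul (hasFDerivAt_p4 m)
    have h2 : (fun m : W4 => m.2.2.2 ^ 2) = fun m : W4 => m.2.2.2 * m.2.2.2 := by
      funext m; ring
    rw [h2]; exact h
  have huc : HasFDerivAt (fun m : W4 => u (pr3 m)) ((fderiv ℝ u p).comp pr3L) m :=
    (hud p).hasFDerivAt.comp m hpr
  have hX2a : HasFDerivAt (fun m : W4 => -(u (pr3 m) + m.2.2.2 ^ 2))
      (-((fderiv ℝ u p).comp pr3L + (m.2.2.2 • p4 + m.2.2.2 • p4))) m := (huc.add hv2).neg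
  have hX2d : HasFDerivAt
      (fun m : W4 => fderiv ℝ u (pr3 m) ey3 + fderiv ℝ u (pr3 m) ex3 * m.2.2.2)
      ((((ContinuousLinearMap.apply ℝ ℝ ey3).comp D2).comp pr3L) +
        ((fderiv ℝ u p ex3) • p4 +
          m.2.2.2 • (((ContinuousLinearMap.apply ℝ ℝ ex3).comp D2).comp pr3L))) m := by
    exact ((hψ ey3).comp m hpr).add (((hψ ex3).comp m hpr).mul (hasFDerivAt_p4 m))
  have hX2 : HasFDerivAt (X2 u)
      ((-((fderiv ℝ u p).comp pr3L + (m.2.2.2 • p4 + m.2.2.2 • p4))).prod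
        ((0 : W4 →L[ℝ] ℝ).prod ((0 : W4 →L[ℝ] ℝ).prod
          ((((ContinuousLinearMap.apply ℝ ℝ ey3).comp D2).comp pr3L) +
            ((fderiv ℝ u p ex3) • p4 +
              m.2.2.2 • (((ContinuousLinearMap.apply ℝ ℝ ex3).comp D2).comp pr3L)))))) m := by
    have : X2 u = fun m : W4 => (-(u (pr3 m) + m.2.2.2 ^ 2), (0:ℝ), (1:ℝ),
        fderiv ℝ u (pr3 m) ey3 + fderiv ℝ u (pr3 m) ex3 * m.2.2.2) := by
      funext m; rfl
    rw [this]
    exact HasFDerivAt.prodMk hX2a (HasFDerivAt.prodMk (hasFDerivAt_const 0 m) (HasFDerivAt.prodMk (hasFDerivAt_const 1 m) hX2d))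
  -- assemble
  have e1 : fderiv ℝ (X2 u) m = _ := hX2.fderiv
  have e2 : fderiv ℝ (X1 u) m = _ := hX1.fderiv
  rw [lieBracket, e1, e2]
  -- decompose directions
  have hdir1 : pr3L (X1 u m) = (-m.2.2.2) • ex3 + ey3 := by
    simp [pr3L_apply, X1, ex3, ey3, Prod.ext_iff]
  have hdir2 : pr3L (X2 u m) = (-(u p + m.2.2.2^2)) • ex3 + et3 := by
    simp [pr3L_apply, X2, ex3, et3, Prod.ext_iff, hp]
  have hp4X1 : p4 (X1 u m) = pd3 ex3 u p := rfl
  have hp4X2 : p4 (X2 u m) = pd3 ey3 u p + pd3 ex3 u p * m.2.2.2 := rfl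
  simp only [ContinuousLinearMap.prod_apply, ContinuousLinearMap.comp_apply,
    ContinuousLinearMap.add_apply, ContinuousLinearMap.neg_apply,
    ContinuousLinearMap.smul_apply, ContinuousLinearMap.zero_apply,
    ContinuousLinearMap.apply_apply, hdir1, hdir2, hp4X1, hp4X2, map_add, map_smul,
    map_neg]
  have hyy := hpd ey3 ey3
  have hxx := hpd ex3 ex3
  have htx := hpd et3 ex3
  have hsym1 := hsymm ex3 ey3
  -- target smul
  have hpde : ∀ e : V3, pd3 e u = fun q => fderiv ℝ u q e := fun _ => rfl
  ext <;>
    simp [Prod.ext_iff, pd3, hpde, (show fderiv ℝ (fun q => fderiv ℝ u q ex3) (pr3 m) = _ from (hψ ex3).fderiv),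
        (show fderiv ℝ (fun q => fderiv ℝ u q ey3) (pr3 m) = _ from (hψ ey3).fderiv),
      ContinuousLinearMap.comp_apply, ContinuousLinearMap.apply_apply,
      Prod.smul_def, smul_eq_mul, hsym1, hp] <;> ring
end
end

section
/- Let k ∈ ℝ with k ≠ 0 and k ≠ 1, let w : (0,∞) → ℝ be three times differentiable, and let Y : (0,∞) → ℝ satisfy Y'(t) = t^{(k−2)/(k−1)} (w''(t))² for all t > 0. Define for t > 0: x(t) = (k−1) t^{(k−2)/(k−1)} w''(t), y(t) = (1/2)(k−1)² t^{(2k−3)/(k−1)} (w''(t))² − (k−1) t^{(k−2)/(k−1)} w'(t) w''(t) + (1/2)(k−1) Y(t), z(t) = ((k−1)/k) t² w''(t) − t w'(t) + w(t), and p(t) = (k−1) t w''(t) − w'(t) (real powers t^a for t > 0). Then for all t > 0: y'(t) = p(t) · x'(t), p'(t) = t^{1/(k−1)} · x'(t), and z'(t) = (1/k) t^{k/(k−1)} · x'(t) = (1/k) (t^{1/(k−1)})^k · x'(t). Consequently, wherever x'(t) ≠ 0, setting q(t) = p'(t)/x'(t) = t^{1/(k−1)} one has dy/dx = p, d²y/dx²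 = q and dz/dx = (1/k) q^k, i.e. the parametrized curve (x, y, z) is Cartan's integral-free-up-to-one-quadrature solution of the equation z' = (1/k)(y'')^k. -/
noncomputable section

open Set

/-- Cartan's integral-free-up-to-one-quadrature solution of `z' = (1/k)(y'')^k`
(`k ≠ 0, 1`): with `Y` a primitive of `t^{(k−2)/(k−1)} (w'')²`, the curve
`x = (k−1) t^{(k−2)/(k−1)} w''`,
`y = (1/2)(k−1)² t^{(2k−3)/(k−1)} (w'')² − (k−1) t^{(k−2)/(k−1)} w' w'' + (1/2)(k−1) Y`,
`z = ((k−1)/k) t² w'' − t w' + w`, together with `p = (k−1) t w'' − w'`, satisfies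
`y' = p x'`, `p' = t^{1/(k−1)} x'` and `z' = (1/k) t^{k/(k−1)} x' = (1/k)(t^{1/(k−1)})^k x'`;
hence wherever `x' ≠ 0` one has `dy/dx = p`, `d²y/dx² = q = t^{1/(k−1)}` and
`dz/dx = (1/k) q^k`. -/
theorem cartan_solution_z'_eq_inv_k_y''_pow_k
    (k : ℝ) (hk0 : k ≠ 0) (hk1 : k ≠ 1)
    (w Y : ℝ → ℝ)
    (hw1 : ∀ t ∈ Ioi (0:ℝ), DifferentiableAt ℝ w t)
    (hw2 : ∀ t ∈ Ioi (0:ℝ), DifferentiableAt ℝ (deriv w) t)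
    (hw3 : ∀ t ∈ Ioi (0:ℝ), DifferentiableAt ℝ (deriv (deriv w)) t)
    (hY : ∀ t ∈ Ioi (0:ℝ),
      HasDerivAt Y (t ^ ((k-2)/(k-1)) * (deriv (deriv w) t)^2) t)
    (x y z p : ℝ → ℝ)
    (hx : ∀ t, x t = (k-1) * t ^ ((k-2)/(k-1)) * deriv (deriv w) t)
    (hy : ∀ t, y t =
      (1/2) * (k-1)^2 * t ^ ((2*k-3)/(k-1)) * (deriv (deriv w) t)^2 -
        (k-1) * t ^ ((k-2)/(k-1)) * deriv w t * deriv (deriv w) t +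
        (1/2) * (k-1) * Y t)
    (hz : ∀ t, z t = ((k-1)/k) * t^2 * deriv (deriv w) t - t * deriv w t + w t)
    (hp : ∀ t, p t = (k-1) * t * deriv (deriv w) t - deriv w t) :
    ∀ t ∈ Ioi (0:ℝ),
      deriv y t = p t * deriv x t ∧
      deriv p t = t ^ ((1:ℝ)/(k-1)) * deriv x t ∧
      deriv z t = (1/k) * t ^ (k/(k-1)) * deriv x t ∧
      (1/k) * t ^ (k/(k-1)) = (1/k) * (t ^ ((1:ℝ)/(k-1))) ^ k ∧
      (deriv x t ≠ 0 →
        deriv y t / deriv x t = p t ∧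
        deriv p t / deriv x t = t ^ ((1:ℝ)/(k-1)) ∧
        deriv z t / deriv x t = (1/k) * (t ^ ((1:ℝ)/(k-1))) ^ k) := by

  have hk1' : k - 1 ≠ 0 := sub_ne_zero.mpr hk1
  intro t ht
  rw [mem_Ioi] at ht
  have htne : t ≠ 0 := ht.ne'
  have hAne : t ^ ((k-2)/(k-1)) ≠ 0 := (Real.rpow_pos_of_pos ht _).ne'
  -- abbreviations
  have hra : HasDerivAt (fun s : ℝ => s ^ ((k-2)/(k-1)))
      ((k-2)/(k-1) * t ^ ((k-2)/(k-1) - 1)) t :=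
    Real.hasDerivAt_rpow_const (Or.inl htne)
  have hrb : HasDerivAt (fun s : ℝ => s ^ ((2*k-3)/(k-1)))
      ((2*k-3)/(k-1) * t ^ ((2*k-3)/(k-1) - 1)) t :=
    Real.hasDerivAt_rpow_const (Or.inl htne)
  have hw0 : HasDerivAt w (deriv w t) t := (hw1 t ht).hasDerivAt
  have hu : HasDerivAt (deriv w) (deriv (deriv w) t) t := (hw2 t ht).hasDerivAt
  have hv : HasDerivAt (deriv (deriv w)) (deriv (deriv (deriv w)) t) t := (hw3 t ht).hasDerivAt
  -- rpow identities
  have ea1 : t ^ ((k-2)/(k-1) - 1) = t ^ ((k-2)/(k-1)) / t := by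
    rw [Real.rpow_sub ht, Real.rpow_one]
  have eb : t ^ ((2*k-3)/(k-1)) = t ^ ((k-2)/(k-1)) * t := by
    rw [show (2*k-3)/(k-1) = (k-2)/(k-1) + 1 by field_simp; ring,
      Real.rpow_add ht, Real.rpow_one]
  have eb1 : t ^ ((2*k-3)/(k-1) - 1) = t ^ ((k-2)/(k-1)) := by
    rw [show (2*k-3)/(k-1) - 1 = (k-2)/(k-1) by field_simp; ring]
  have ec : t ^ ((1:ℝ)/(k-1)) = t / t ^ ((k-2)/(k-1)) := by
    rw [show (1:ℝ)/(k-1) = 1 - (k-2)/(k-1) by field_simp; ring,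
      Real.rpow_sub ht, Real.rpow_one]
  have ek : t ^ (k/(k-1)) = t * (t / t ^ ((k-2)/(k-1))) := by
    rw [show k/(k-1) = 1 + (1 - (k-2)/(k-1)) by field_simp; ring,
      Real.rpow_add ht, Real.rpow_one, Real.rpow_sub ht, Real.rpow_one]
  -- derivatives of the defined curves
  have hxf : x = fun s => (k-1) * s ^ ((k-2)/(k-1)) * deriv (deriv w) s := funext hx
  have hX : HasDerivAt (fun s => (k-1) * s ^ ((k-2)/(k-1)) * deriv (deriv w) s)
      ((k-1) * ((k-2)/(k-1) * t ^ ((k-2)/(k-1) - 1)) * deriv (deriv w) t +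
        (k-1) * t ^ ((k-2)/(k-1)) * deriv (deriv (deriv w)) t) t :=
    (hra.const_mul (k-1)).mul hv
  have hdx : deriv x t =
      (k-1) * ((k-2)/(k-1) * t ^ ((k-2)/(k-1) - 1)) * deriv (deriv w) t +
        (k-1) * t ^ ((k-2)/(k-1)) * deriv (deriv (deriv w)) t := by
    rw [hxf]; exact hX.deriv
  have hpf : p = fun s => (k-1) * s * deriv (deriv w) s - deriv w s := funext hp
  have hP : HasDerivAt (fun s => (k-1) * s * deriv (deriv w) s - deriv w s)
      (((k-1) * 1 * deriv (deriv w) t + (k-1) * t * deriv (deriv (deriv w)) t) -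
        deriv (deriv w) t) t :=
    (((hasDerivAt_id t).const_mul (k-1)).mul hv).sub hu
  have hdp : deriv p t =
      ((k-1) * 1 * deriv (deriv w) t + (k-1) * t * deriv (deriv (deriv w)) t) -
        deriv (deriv w) t := by
    rw [hpf]; exact hP.deriv
  have hzf : z = fun s => (k-1)/k * s^2 * deriv (deriv w) s - s * deriv w s + w s :=
    funext hz
  have hsq : HasDerivAt (fun s : ℝ => s ^ 2) (2 * t) t := by
    simpa using hasDerivAt_pow 2 t
  have hZ : HasDerivAt (fun s => (k-1)/k * s^2 * deriv (deriv w) s - s * deriv w s + w s)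
      (((k-1)/k * (2 * t) * deriv (deriv w) t + (k-1)/k * t^2 * deriv (deriv (deriv w)) t) -
        (1 * deriv w t + t * deriv (deriv w) t) + deriv w t) t :=
    (((hsq.const_mul ((k-1)/k)).mul hv).sub ((hasDerivAt_id t).mul hu)).add hw0
  have hdz : deriv z t =
      ((k-1)/k * (2 * t) * deriv (deriv w) t + (k-1)/k * t^2 * deriv (deriv (deriv w)) t) -
        (1 * deriv w t + t * deriv (deriv w) t) + deriv w t := by
    rw [hzf]; exact hZ.deriv
  have hyf : y = fun s =>
      (1/2) * (k-1)^2 * s ^ ((2*k-3)/(k-1)) * (deriv (deriv w) s)^2 -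
        (k-1) * s ^ ((k-2)/(k-1)) * deriv w s * deriv (deriv w) s +
        (1/2) * (k-1) * Y s := funext hy
  have hYd : HasDerivAt (fun s =>
      (1/2) * (k-1)^2 * s ^ ((2*k-3)/(k-1)) * (deriv (deriv w) s)^2 -
        (k-1) * s ^ ((k-2)/(k-1)) * deriv w s * deriv (deriv w) s +
        (1/2) * (k-1) * Y s)
      (((1/2) * (k-1)^2 * ((2*k-3)/(k-1) * t ^ ((2*k-3)/(k-1) - 1)) * (deriv (deriv w) t)^2 +
          (1/2) * (k-1)^2 * t ^ ((2*k-3)/(k-1)) *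
            (2 * deriv (deriv w) t ^ 1 * deriv (deriv (deriv w)) t)) -
        (((k-1) * ((k-2)/(k-1) * t ^ ((k-2)/(k-1) - 1)) * deriv w t +
            (k-1) * t ^ ((k-2)/(k-1)) * deriv (deriv w) t) * deriv (deriv w) t +
          (k-1) * t ^ ((k-2)/(k-1)) * deriv w t * deriv (deriv (deriv w)) t) +
        (1/2) * (k-1) * (t ^ ((k-2)/(k-1)) * (deriv (deriv w) t)^2)) t :=
    (((hrb.const_mul ((1/2) * (k-1)^2)).mul (hv.pow 2)).sub
      (((hra.const_mul (k-1)).mul hu).mul hv)).add ((hY t ht).const_mul ((1/2) * (k-1)))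
  have hdy : deriv y t =
      ((1/2) * (k-1)^2 * ((2*k-3)/(k-1) * t ^ ((2*k-3)/(k-1) - 1)) * (deriv (deriv w) t)^2 +
          (1/2) * (k-1)^2 * t ^ ((2*k-3)/(k-1)) *
            (2 * deriv (deriv w) t ^ 1 * deriv (deriv (deriv w)) t)) -
        (((k-1) * ((k-2)/(k-1) * t ^ ((k-2)/(k-1) - 1)) * deriv w t +
            (k-1) * t ^ ((k-2)/(k-1)) * deriv (deriv w) t) * deriv (deriv w) t +
          (k-1) * t ^ ((k-2)/(k-1)) * deriv w t * deriv (deriv (deriv w)) t) +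
        (1/2) * (k-1) * (t ^ ((k-2)/(k-1)) * (deriv (deriv w) t)^2) := by
    rw [hyf]; exact hYd.deriv
  have h1 : deriv y t = p t * deriv x t := by
    rw [hdy, hdx, hp, ea1, eb, eb1]
    field_simp
    ring
  have h2 : deriv p t = t ^ ((1:ℝ)/(k-1)) * deriv x t := by
    rw [hdp, hdx, ea1, ec]
    field_simp
    ring
  have h3 : deriv z t = (1/k) * t ^ (k/(k-1)) * deriv x t := by
    rw [hdz, hdx, ea1, ek]
    field_simp
    ring
  have h4 : (1/k) * t ^ (k/(k-1)) = (1/k) * (t ^ ((1:ℝ)/(k-1))) ^ k := by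
    rw [← Real.rpow_mul ht.le, show (1:ℝ)/(k-1) * k = k/(k-1) by ring]
  refine ⟨h1, h2, h3, h4, fun hne => ⟨?_, ?_, ?_⟩⟩
  · rw [h1]; field_simp
  · rw [h2]; field_simp
  · rw [h3, ← h4]; exact mul_div_cancel_right₀ _ hne
end
end
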